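/- Let B > 0 and r₀ > 0, and for r > r₀ define σ(r) := (1/2)·ln( √(B/(2r₀⁴)) · r² · √(1 − r₀⁸/r⁸) ). Then σ is differentiable on (r₀, ∞) with σ'(r) = (r⁸ + r₀⁸)/( r·(r⁸ − r₀⁸) ), and it satisfies r²·σ'(r)² = 1 + B²·exp(−8·σ(r)) for all r > r₀. -/

import Mathlib

/-!
Writing `C = √(B/(2r₀⁴))`, for `r > r₀ > 0` the logarithm splits as
`σ(r) = ½ log C + ¼ log (r⁸ − r₀⁸) − log r`, whose derivative is `(r⁸ + r₀⁸)/(r (r⁸ − r₀⁸))`.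
On the other side `e^{2σ} = C r² √(1 − r₀⁸/r⁸)` gives `B² e^{−8σ} = 4 r₀⁸ r⁸/(r⁸ − r₀⁸)²`,
and the identity is `(r⁸ − r₀⁸)² + 4 r₀⁸ r⁸ = (r⁸ + r₀⁸)²`.
-/

/-- The Gubser/Kehagias–Sfetsos radial coordinate change
`σ(r) = (1/2) ln(√(B/(2r₀⁴)) r² √(1 − r₀⁸/r⁸))`. -/
noncomputable def gksSigma (B r₀ r : ℝ) : ℝ :=
  (1 / 2) * Real.log (Real.sqrt (B / (2 * r₀ ^ 4)) * r ^ 2 * Real.sqrt (1 - r₀ ^ 8 / r ^ 8))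

open Real

lemma pow_eight_sub_pow_eight_pos {r₀ r : ℝ} (hr₀ : 0 < r₀) (hr : r₀ < r) :
    0 < r ^ 8 - r₀ ^ 8 :=
  sub_pos.2 (pow_lt_pow_left₀ hr hr₀.le (by norm_num))

lemma hasDerivAt_quarter_log_pow_eight_sub_sub_log {a x : ℝ} (hx : x ≠ 0) (ha : a < x ^ 8) :
    HasDerivAt (fun y => (1 / 4) * log (y ^ 8 - a) - log y)
      ((x ^ 8 + a) / (x * (x ^ 8 - a))) x := by
  have hxa : x ^ 8 - a ≠ 0 := (sub_pos.2 ha).ne'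
  have hpow : HasDerivAt (fun y : ℝ => y ^ 8 - a) (8 * x ^ 7) x := by
    simpa using (hasDerivAt_pow 8 x).sub_const a
  refine (((hpow.log hxa).const_mul (1 / 4)).sub (hasDerivAt_log hx)).congr_deriv ?_
  field_simp
  ring

variable {B r₀ x : ℝ}

lemma gksSigma_eq_of_lt (hB : 0 < B) (hr₀ : 0 < r₀) (hx : r₀ < x) :
    gksSigma B r₀ x =
      (1 / 2) * log √(B / (2 * r₀ ^ 4)) + ((1 / 4) * log (x ^ 8 - r₀ ^ 8) - log x) := by
  have hx0 : 0 < x := hr₀.trans hx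
  have hx8 := pow_eight_sub_pow_eight_pos hr₀ hx
  have hsqrt : √(1 - r₀ ^ 8 / x ^ 8) = √(x ^ 8 - r₀ ^ 8) / x ^ 4 := by
    rw [← sqrt_sq (by positivity : (0 : ℝ) ≤ x ^ 4), ← sqrt_div' _ (by positivity)]
    congr 1
    field_simp
  rw [gksSigma, hsqrt, mul_assoc, log_mul (by positivity) (by positivity),
    log_mul (by positivity) (by positivity), log_div (by positivity) (by positivity),
    log_sqrt hx8.le, log_pow, log_pow]
  push_cast
  ring

lemma sq_mul_exp_neg_eight_mul_gksSigma (hB : 0 < B) (hr₀ : 0 < r₀) (hx : r₀ < x) :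
    B ^ 2 * exp (-8 * gksSigma B r₀ x) = 4 * r₀ ^ 8 * x ^ 8 / (x ^ 8 - r₀ ^ 8) ^ 2 := by
  have hx0 : 0 < x := hr₀.trans hx
  have hx8 := pow_eight_sub_pow_eight_pos hr₀ hx
  have hone : 0 < 1 - r₀ ^ 8 / x ^ 8 := by
    rw [sub_pos, div_lt_one (by positivity)]
    linarith
  have hexp :
      exp (2 * gksSigma B r₀ x) = √(B / (2 * r₀ ^ 4)) * x ^ 2 * √(1 - r₀ ^ 8 / x ^ 8) := by
    rw [gksSigma, ← mul_assoc, show (2 : ℝ) * (1 / 2) = 1 by norm_num, one_mul,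
      exp_log (by positivity)]
  have hexp8 : exp (-8 * gksSigma B r₀ x) = (exp (2 * gksSigma B r₀ x) ^ 4)⁻¹ := by
    rw [← exp_nat_mul, ← exp_neg]
    ring_nf
  rw [hexp8, hexp, show ∀ c s : ℝ, (c * x ^ 2 * s) ^ 4 = (c ^ 2) ^ 2 * x ^ 8 * (s ^ 2) ^ 2 by
    intros; ring, sq_sqrt (by positivity), sq_sqrt hone.le]
  field_simp
  ring

/-- **GKS coordinate change.** For `r > r₀ > 0` and `B > 0`, `σ` is differentiable with
`σ'(r) = (r⁸ + r₀⁸)/(r (r⁸ − r₀⁸))` and satisfies `r² σ'(r)² = 1 + B² e^{−8σ(r)}`. -/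
theorem gks_coordinate_change (B r₀ : ℝ) (hB : 0 < B) (hr₀ : 0 < r₀)
    (r : ℝ) (hr : r₀ < r) :
    HasDerivAt (gksSigma B r₀) ((r ^ 8 + r₀ ^ 8) / (r * (r ^ 8 - r₀ ^ 8))) r ∧
    r ^ 2 * ((r ^ 8 + r₀ ^ 8) / (r * (r ^ 8 - r₀ ^ 8))) ^ 2 =
      1 + B ^ 2 * Real.exp (-8 * gksSigma B r₀ r) := by
  have hr0 : 0 < r := hr₀.trans hr
  have hr8 := pow_eight_sub_pow_eight_pos hr₀ hr
  constructor
  · have hφ := (hasDerivAt_quarter_log_pow_eight_sub_sub_log hr0.ne' (sub_pos.1 hr8)).const_add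
      ((1 / 2) * log √(B / (2 * r₀ ^ 4)))
    refine hφ.congr_of_eventuallyEq ?_
    filter_upwards [Ioi_mem_nhds hr] with x hx using gksSigma_eq_of_lt hB hr₀ hx
  · rw [sq_mul_exp_neg_eight_mul_gksSigma hB hr₀ hr]
    field_simp
    ring
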